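/- arXiv:1905.13730 — 7 statements merged into one kernel-verified Lean document; each statement's English description precedes it below -/
import Mathlib

section
/- For positive integers t ≥ 2 and d ≥ 1, ((t-1)·C(t+d, t) + C(t-1+d, t))·C(t-2+d, t-1) = t·C(t-1+d, t-1)·C(t-1+d, t). -/
/-!
With `k = t - 2`, write `B = C(k+d+1, k+1)`, `c = C(k+d+1, k+2)` and `a = C(k+d, k+1)`. Pascal's rule turns the
left side into `((k+1) B + (k+2) c) a`, and the two absorption identities `(k+2) c = d B` and
`(k+d+1) a = d B` reduce both sides to `d B²`.
-/

namespace Nat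

theorem choose_succ_succ_mul_choose_eq (k d : ℕ) :
    ((k + 1) * choose (k + d + 2) (k + 2) + choose (k + d + 1) (k + 2)) * choose (k + d) (k + 1)
      = (k + 2) * choose (k + d + 1) (k + 1) * choose (k + d + 1) (k + 2) := by
  have pascal : choose (k + d + 2) (k + 2)
      = choose (k + d + 1) (k + 1) + choose (k + d + 1) (k + 2) :=
    choose_succ_succ' (k + d + 1) (k + 1)
  have absorb_top : choose (k + d + 1) (k + 2) * (k + 2) = choose (k + d + 1) (k + 1) * d := by
    simpa using choose_succ_right_eq (k + d + 1) (k + 1)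
  have absorb_bottom : choose (k + d) (k + 1) * (k + d + 1) = choose (k + d + 1) (k + 1) * d := by
    simpa using choose_mul_succ_eq (k + d) (k + 1)
  rw [pascal]
  zify at absorb_top absorb_bottom ⊢
  linear_combination
    ((choose (k + d) (k + 1) : ℤ) - choose (k + d + 1) (k + 1)) * absorb_top
      + (choose (k + d + 1) (k + 1) : ℤ) * absorb_bottom

end Nat

theorem stmt_1_general (t d : ℕ) (ht : 2 ≤ t) :
    ((t - 1) * Nat.choose (t + d) t + Nat.choose (t - 1 + d) t) * Nat.choose (t - 2 + d) (t - 1)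
      = t * Nat.choose (t - 1 + d) (t - 1) * Nat.choose (t - 1 + d) t := by
  obtain ⟨k, rfl⟩ : ∃ k, t = k + 2 := ⟨t - 2, by omega⟩
  have h := Nat.choose_succ_succ_mul_choose_eq k d
  rwa [show k + d + 2 = k + 2 + d by omega, show k + d + 1 = k + 2 - 1 + d by omega,
    show k + d = k + 2 - 2 + d by omega] at h

theorem stmt_1 (t d : ℕ) (ht : 2 ≤ t) (hd : 1 ≤ d) :
    ((t - 1) * Nat.choose (t + d) t + Nat.choose (t - 1 + d) t) * Nat.choose (t - 2 + d) (t - 1)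
      = t * Nat.choose (t - 1 + d) (t - 1) * Nat.choose (t - 1 + d) t :=
  stmt_1_general t d ht
end

section
/- Let B be a finite nonempty set and M ⊆ ℕ^B an upper set. If U ∈ ℕ and μ_U(M) > 0, then μ_U(M) ≤ μ_{U+1}(M); moreover if 0 < μ_U(M) < 1 then μ_U(M) < μ_{U+1}(M), and lim_{i→∞} μ_i(M) = 1. Here μ_T is the uniform probability measure on functions f : B → ℕ with total sum T. -/
open Finset

/-- The uniform probability of the event `M` under the uniform distribution on
functions `f : B → ℕ` with `∑ b, f b = T`. -/
noncomputable def uniformProb (B : Type*) [Fintype B] (T : ℕ) (M : Set (B → ℕ)) : ℝ := by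
  classical
  exact (((Fintype.piFinset fun _ : B => Finset.range (T + 1)).filter
        (fun f => (∑ b, f b) = T ∧ f ∈ M)).card : ℝ) /
      (((Fintype.piFinset fun _ : B => Finset.range (T + 1)).filter
        (fun f => (∑ b, f b) = T)).card : ℝ)

/-!
Let `S_T` be the functions of total `T` (`piAntidiag univ T`) and `A_T = S_T ∩ M`. Counting
pairs `(f, b)` with `f ∈ A_T`, weighted by `f b + 1`, through `f ↦ f + e_b` gives
`(T + |B|) |A_T| = ∑_{f ∈ S_{T+1}} ∑_b [f - e_b ∈ M] f b`. For an upper set every nonzero term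
has `f ∈ A_{T+1}` and is at most `T + 1`, with equality unless some `f - e_b` with `f b > 0`
leaves `M`; for `M` the whole space the identity reads `(T + |B|) |S_T| = (T + 1) |S_{T+1}|`.
Dividing gives `μ_T ≤ μ_{T+1}`, strictly once `M` and its complement both meet `S_T`, since
then such a boundary point exists at level `T + 1`. For the limit, translation by `m ∈ M` of
total `U` embeds `S_k` into `A_{k+U}`, and `|S_{k+U}| / |S_k|` is a product of `U` ratios
`(j + |B|) / (j + 1)`, each tending to `1`.
-/

open Filter Topology

section Counting

variable {B : Type*} [DecidableEq B]

lemma sub_single_add_single {f : B → ℕ} {b : B} (hb : f b ≠ 0) :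
    f - Pi.single b 1 + Pi.single b 1 = f := by
  ext i
  rcases eq_or_ne i b with rfl | hi <;> simp [*]
  omega

variable [Fintype B]

lemma sum_add_single (f : B → ℕ) (b : B) :
    ∑ i, (f + Pi.single b 1 : B → ℕ) i = ∑ i, f i + 1 := by
  simp [sum_add_distrib]

lemma sum_sub_single_add_one {f : B → ℕ} {b : B} (hb : f b ≠ 0) :
    ∑ i, (f - Pi.single b 1 : B → ℕ) i + 1 = ∑ i, f i := by
  rw [← sum_add_single, sub_single_add_single hb]

lemma uniformProb_eq_card_div (M : Set (B → ℕ)) [DecidablePred (· ∈ M)] (T : ℕ) :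
    uniformProb B T M =
      (#{f ∈ piAntidiag univ T | f ∈ M} : ℝ) / #(piAntidiag (univ : Finset B) T) := by
  unfold uniformProb
  have le_of_sum_eq {f : B → ℕ} (hf : ∑ b, f b = T) (a : B) : f a ≤ T :=
    hf ▸ single_le_sum (by simp) (mem_univ a)
  congr 3 <;> ext f <;> simp +contextual [le_of_sum_eq]

/-- Removing one unit from coordinate `b` of `f` and landing in `s` is counted with multiplicity
`f b`; this also makes the truncated `f - Pi.single b 1 = f` at `f b = 0` harmless. -/
def downWeight (s : Set (B → ℕ)) [DecidablePred (· ∈ s)] (f : B → ℕ) : ℕ :=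
  ∑ b : B, if f - Pi.single b 1 ∈ s then f b else 0

variable (s : Set (B → ℕ)) [DecidablePred (· ∈ s)]

/-- `f ↦ f + Pi.single b 1` is a bijection from level `T` onto the functions of level `T + 1`
with positive `b`-coordinate. -/
lemma sum_filter_apply_add_one_eq (T : ℕ) (b : B) :
    ∑ f ∈ piAntidiag univ T with f ∈ s, (f b + 1) =
      ∑ f ∈ piAntidiag univ (T + 1), if f - Pi.single b 1 ∈ s then f b else 0 := by
  refine sum_bij_ne_zero (fun f _ _ ↦ f + Pi.single b 1) ?_ ?_ ?_ ?_
  · intro f hf _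
    simp_all [sum_add_distrib]
  · intro f₁ _ _ f₂ _ _ h
    exact add_right_cancel h
  · intro f hf hne
    have hb : f b ≠ 0 := fun h ↦ hne (by simp [h])
    refine ⟨f - Pi.single b 1, ?_, by simp, sub_single_add_single hb⟩
    have := sum_sub_single_add_one hb
    simp_all
  · intro f hf _
    simp_all

theorem mul_card_filter_eq_sum_downWeight (T : ℕ) :
    (T + Fintype.card B) * #{f ∈ piAntidiag univ T | f ∈ s} =
      ∑ f ∈ piAntidiag univ (T + 1), downWeight s f := by
  calc (T + Fintype.card B) * #{f ∈ piAntidiag univ T | f ∈ s}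
      = ∑ f ∈ piAntidiag univ T with f ∈ s, ∑ b, (f b + 1) := by
        rw [sum_congr rfl fun f hf ↦ ?_, sum_const, smul_eq_mul, mul_comm]
        simp_all [sum_add_distrib]
    _ = ∑ b, ∑ f ∈ piAntidiag univ (T + 1), if f - Pi.single b 1 ∈ s then f b else 0 := by
        rw [sum_comm]
        exact sum_congr rfl fun b _ ↦ sum_filter_apply_add_one_eq s T b
    _ = _ := sum_comm

variable {s}

lemma downWeight_le (f : B → ℕ) : downWeight s f ≤ ∑ b, f b :=
  sum_le_sum fun b _ ↦ by split_ifs <;> simp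

lemma downWeight_lt {f : B → ℕ} {a : B} (ha : f a ≠ 0) (h : f - Pi.single a 1 ∉ s) :
    downWeight s f < ∑ b, f b :=
  sum_lt_sum (fun b _ ↦ by split_ifs <;> simp) ⟨a, mem_univ a, by simp [h]; omega⟩

lemma downWeight_univ (f : B → ℕ) : downWeight Set.univ f = ∑ b, f b := by
  simp [downWeight]

lemma IsUpperSet.downWeight_eq_zero (hs : IsUpperSet s) {f : B → ℕ} (hf : f ∉ s) :
    downWeight s f = 0 :=
  sum_eq_zero fun _ _ ↦ if_neg fun h ↦ hf (hs tsub_le_self h)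

theorem mul_card_piAntidiag_eq_succ_mul (T : ℕ) :
    (T + Fintype.card B) * #(piAntidiag (univ : Finset B) T) =
      (T + 1) * #(piAntidiag (univ : Finset B) (T + 1)) := by
  calc (T + Fintype.card B) * #(piAntidiag (univ : Finset B) T)
      = (T + Fintype.card B) * #{f ∈ piAntidiag univ T | f ∈ Set.univ} := by simp
    _ = ∑ f ∈ piAntidiag univ (T + 1), downWeight Set.univ f :=
        mul_card_filter_eq_sum_downWeight _ T
    _ = ∑ f ∈ piAntidiag (univ : Finset B) (T + 1), (T + 1) :=
        sum_congr rfl fun f hf ↦ by simpa [downWeight_univ] using hf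
    _ = _ := by simp [mul_comm]

theorem IsUpperSet.mul_card_filter_eq_sum_filter_downWeight (hs : IsUpperSet s) (T : ℕ) :
    (T + Fintype.card B) * #{f ∈ piAntidiag univ T | f ∈ s} =
      ∑ f ∈ piAntidiag univ (T + 1) with f ∈ s, downWeight s f := by
  rw [mul_card_filter_eq_sum_downWeight, sum_filter_of_ne]
  exact fun f _ ↦ Not.imp_symm hs.downWeight_eq_zero

theorem IsUpperSet.mul_card_filter_le (hs : IsUpperSet s) (T : ℕ) :
    (T + Fintype.card B) * #{f ∈ piAntidiag univ T | f ∈ s} ≤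
      (T + 1) * #{f ∈ piAntidiag univ (T + 1) | f ∈ s} := by
  rw [hs.mul_card_filter_eq_sum_filter_downWeight, mul_comm]
  exact sum_le_card_nsmul _ _ _ fun f hf ↦ (downWeight_le f).trans_eq (by simp_all)

theorem IsUpperSet.mul_card_filter_lt (hs : IsUpperSet s) {T : ℕ} {f : B → ℕ} (hf : f ∈ s)
    (hsum : ∑ b, f b = T + 1) {a : B} (ha : f a ≠ 0) (h : f - Pi.single a 1 ∉ s) :
    (T + Fintype.card B) * #{f ∈ piAntidiag univ T | f ∈ s} <
      (T + 1) * #{f ∈ piAntidiag univ (T + 1) | f ∈ s} := by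
  calc (T + Fintype.card B) * #{f ∈ piAntidiag univ T | f ∈ s}
      = ∑ f ∈ piAntidiag univ (T + 1) with f ∈ s, downWeight s f :=
        hs.mul_card_filter_eq_sum_filter_downWeight T
    _ < ∑ f ∈ piAntidiag univ (T + 1) with f ∈ s, (T + 1) :=
        sum_lt_sum (fun g hg ↦ (downWeight_le g).trans_eq (by simp_all))
          ⟨f, by simp [hf, hsum], hsum ▸ downWeight_lt ha h⟩
    _ = _ := by simp [mul_comm]

/-- Walk from `h` towards `g` inside `s ∩ {∑ = ∑ g}` by moving single units: a point of `s`
closest to `g` can only move out of `s`, and the intermediate point of that move is the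
required `f`. -/
theorem IsUpperSet.exists_boundary (hs : IsUpperSet s) {g h : B → ℕ} (hh : h ∈ s) (hg : g ∉ s)
    (hsum : ∑ b, h b = ∑ b, g b) :
    ∃ f ∈ s, ∑ b, f b = ∑ b, g b + 1 ∧ ∃ a, f a ≠ 0 ∧ f - Pi.single a 1 ∉ s := by
  obtain ⟨h, hh, hmin⟩ := exists_min_image {h ∈ piAntidiag univ (∑ b, g b) | h ∈ s}
    (fun h ↦ ∑ b, (h b - g b)) ⟨h, by simp [hh, hsum]⟩
  simp only [mem_filter, mem_piAntidiag, mem_univ, implies_true, and_true] at hh hmin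
  obtain ⟨a, ha⟩ : ∃ a, g a < h a := by
    by_contra! hle
    exact hg (hs hle hh.2)
  obtain ⟨c, hc⟩ : ∃ c, h c < g c := by
    by_contra! hge
    exact (sum_lt_sum (fun b _ ↦ hge b) ⟨a, mem_univ a, ha⟩).ne' hh.1
  have hac : a ≠ c := by rintro rfl; omega
  have hfa : (h + Pi.single c 1 : B → ℕ) a ≠ 0 := by simp [hac]; omega
  refine ⟨h + Pi.single c 1, hs le_self_add hh.2, by rw [sum_add_single, hh.1], a, hfa, ?_⟩
  intro hmem
  have hsum' := sum_sub_single_add_one hfa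
  rw [sum_add_single, hh.1] at hsum'
  refine (hmin _ ⟨Nat.add_right_cancel hsum', hmem⟩).not_gt
    (sum_lt_sum (fun b _ ↦ ?_) ⟨a, mem_univ a, ?_⟩)
  · simp only [Pi.sub_apply, Pi.add_apply, Pi.single_apply]
    split_ifs <;> subst_vars <;> omega
  · simp [hac]
    omega

theorem IsUpperSet.card_piAntidiag_le_card_filter (hs : IsUpperSet s) {m : B → ℕ} (hm : m ∈ s)
    (k : ℕ) :
    #(piAntidiag (univ : Finset B) k) ≤ #{f ∈ piAntidiag univ (k + ∑ b, m b) | f ∈ s} :=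
  card_le_card_of_injOn (· + m)
    (fun g hg ↦ by simp_all [sum_add_distrib]; exact hs le_add_self hm)
    fun _ _ _ _ ↦ add_right_cancel

end Counting

lemma tendsto_div_add_of_tendsto_succ_div {a : ℕ → ℝ} (ha : ∀ k, a k ≠ 0)
    (h : Tendsto (fun k ↦ a (k + 1) / a k) atTop (𝓝 1)) (U : ℕ) :
    Tendsto (fun k ↦ a (k + U) / a k) atTop (𝓝 1) := by
  induction U with
  | zero => simp [div_self (ha _)]
  | succ U ih =>
    have := (h.comp (tendsto_add_atTop_nat U)).mul ih
    rw [one_mul] at this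
    refine this.congr fun k ↦ ?_
    simp [← add_assoc, div_mul_div_cancel₀ (ha _)]

section Probability

variable {B : Type*} [Fintype B] [DecidableEq B] {M : Set (B → ℕ)}

lemma uniformProb_le_one (T : ℕ) : uniformProb B T M ≤ 1 := by
  classical
  rw [uniformProb_eq_card_div]
  exact div_le_one_of_le₀ (by exact_mod_cast card_le_card (filter_subset _ _)) (by positivity)

lemma exists_mem_of_uniformProb_pos {T : ℕ} (hpos : 0 < uniformProb B T M) :
    ∃ f, ∑ b, f b = T ∧ f ∈ M := by
  classical
  rw [uniformProb_eq_card_div] at hpos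
  by_contra! H
  rw [filter_false_of_mem fun f hf ↦ H f (by simpa using hf)] at hpos
  simp at hpos

lemma uniformProb_succ_eq_mul_card_div [DecidablePred (· ∈ M)] (T : ℕ) :
    uniformProb B (T + 1) M = ((T + 1) * #{f ∈ piAntidiag univ (T + 1) | f ∈ M} : ℝ) /
      ((T + 1) * #(piAntidiag (univ : Finset B) (T + 1))) := by
  rw [uniformProb_eq_card_div, mul_div_mul_left _ _ (by positivity)]

lemma cast_card_piAntidiag_succ (T : ℕ) :
    (#(piAntidiag (univ : Finset B) (T + 1)) : ℝ) =
      (T + Fintype.card B) / (T + 1) * #(piAntidiag (univ : Finset B) T) := by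
  rw [div_mul_eq_mul_div, eq_div_iff (by positivity), mul_comm]
  exact_mod_cast (mul_card_piAntidiag_eq_succ_mul T).symm

variable [Nonempty B]

lemma card_piAntidiag_pos (T : ℕ) : 0 < #(piAntidiag (univ : Finset B) T) :=
  card_pos.2 ⟨Pi.single (Classical.arbitrary B) T, by simp⟩

lemma tendsto_card_piAntidiag_succ_div :
    Tendsto (fun k ↦ (#(piAntidiag (univ : Finset B) (k + 1)) : ℝ) /
      #(piAntidiag (univ : Finset B) k)) atTop (𝓝 1) := by
  have h := tendsto_add_mul_div_add_mul_atTop_nhds (Fintype.card B : ℝ) 1 1 one_ne_zero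
  rw [div_one] at h
  refine h.congr fun k ↦ ?_
  rw [cast_card_piAntidiag_succ,
    mul_div_cancel_right₀ _ (by exact_mod_cast (card_piAntidiag_pos k).ne')]
  ring

lemma uniformProb_eq_mul_card_div [DecidablePred (· ∈ M)] (T : ℕ) :
    uniformProb B T M = ((T + Fintype.card B) * #{f ∈ piAntidiag univ T | f ∈ M} : ℝ) /
      ((T + 1) * #(piAntidiag (univ : Finset B) (T + 1))) := by
  rw [uniformProb_eq_card_div, cast_card_piAntidiag_succ, ← mul_assoc,
    mul_div_cancel₀ _ (by positivity), mul_div_mul_left _ _ (by positivity)]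

lemma exists_notMem_of_uniformProb_lt_one {T : ℕ} (hlt : uniformProb B T M < 1) :
    ∃ f, ∑ b, f b = T ∧ f ∉ M := by
  classical
  rw [uniformProb_eq_card_div] at hlt
  by_contra! H
  rw [filter_true_of_mem fun f hf ↦ H f (by simpa using hf),
    div_self (by exact_mod_cast (card_piAntidiag_pos T).ne')] at hlt
  exact hlt.false

theorem IsUpperSet.uniformProb_le_succ (hM : IsUpperSet M) (T : ℕ) :
    uniformProb B T M ≤ uniformProb B (T + 1) M := by
  classical
  rw [uniformProb_eq_mul_card_div, uniformProb_succ_eq_mul_card_div]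
  exact div_le_div_of_nonneg_right (by exact_mod_cast hM.mul_card_filter_le T) (by positivity)

theorem IsUpperSet.uniformProb_lt_succ (hM : IsUpperSet M) {T : ℕ} (hpos : 0 < uniformProb B T M)
    (hlt : uniformProb B T M < 1) : uniformProb B T M < uniformProb B (T + 1) M := by
  classical
  obtain ⟨h, hhT, hh⟩ := exists_mem_of_uniformProb_pos hpos
  obtain ⟨g, hgT, hg⟩ := exists_notMem_of_uniformProb_lt_one hlt
  obtain ⟨f, hf, hfT, a, ha, hfa⟩ := hM.exists_boundary hh hg (hhT.trans hgT.symm)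
  rw [uniformProb_eq_mul_card_div, uniformProb_succ_eq_mul_card_div]
  refine div_lt_div_of_pos_right ?_
    (mul_pos (by positivity) (by exact_mod_cast card_piAntidiag_pos (T + 1)))
  exact_mod_cast hM.mul_card_filter_lt hf (hgT ▸ hfT) ha hfa

theorem IsUpperSet.tendsto_uniformProb (hM : IsUpperSet M) (hne : M.Nonempty) :
    Tendsto (fun T ↦ uniformProb B T M) atTop (𝓝 1) := by
  classical
  obtain ⟨m, hm⟩ := hne
  rw [← tendsto_add_atTop_iff_nat (∑ b, m b)]
  have hratio := (tendsto_div_add_of_tendsto_succ_div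
    (fun k ↦ (Nat.cast_pos.2 (card_piAntidiag_pos (B := B) k)).ne')
    tendsto_card_piAntidiag_succ_div (∑ b, m b)).inv₀ one_ne_zero
  rw [inv_one] at hratio
  refine tendsto_of_tendsto_of_tendsto_of_le_of_le hratio tendsto_const_nhds (fun k ↦ ?_)
    fun _ ↦ uniformProb_le_one _
  rw [inv_div, uniformProb_eq_card_div]
  exact div_le_div_of_nonneg_right (by exact_mod_cast hM.card_piAntidiag_le_card_filter hm k)
    (by positivity)

end Probability

theorem stmt_4 (B : Type*) [Fintype B] [Nonempty B] (M : Set (B → ℕ))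
    (hM : ∀ x ∈ M, ∀ y : B → ℕ, x ≤ y → y ∈ M)
    (U : ℕ) (hU : 0 < uniformProb B U M) :
    uniformProb B U M ≤ uniformProb B (U + 1) M ∧
    (uniformProb B U M < 1 → uniformProb B U M < uniformProb B (U + 1) M) ∧
    Filter.Tendsto (fun i => uniformProb B i M) Filter.atTop (nhds 1) := by
  classical
  have hupper : IsUpperSet M := fun x y hxy hx ↦ hM x hx y hxy
  obtain ⟨m, -, hm⟩ := exists_mem_of_uniformProb_pos hU
  exact ⟨hupper.uniformProb_le_succ U, hupper.uniformProb_lt_succ hU,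
    hupper.tendsto_uniformProb ⟨m, hm⟩⟩
end

section
/- Let B be a finite nonempty set and M ⊆ ℕ^B an upper set with M ≠ ∅ and M ≠ ℕ^B. Then the function x ↦ ν_x(M) on [0,∞) is strictly increasing and continuous, satisfies ν_0(M) = 0, and tends to 1 as x → ∞. Here ν_x is the product of |B| copies of the geometric distribution on ℕ with parameter (1 + x/|B|)^{-1}. -/
open Filter Topology

/-- `geomProdProb B x M` is `ν_x(M)`: the probability of `M ⊆ ℕ^B` under the product of
`|B|` copies of the geometric distribution on `ℕ` with parameter `(1 + x/|B|)⁻¹`. -/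
noncomputable def geomProdProb (B : Type*) [Fintype B] (x : ℝ) (M : Set (B → ℕ)) : ℝ :=
  ∑' f : M, ∏ b : B,
    (1 + x / Fintype.card B)⁻¹ * (1 - (1 + x / Fintype.card B)⁻¹) ^ (f : B → ℕ) b

/-!
Write `q = 1 - (1 + x/|B|)⁻¹`, which increases continuously from `0` to `1` as `x` runs over
`[0, ∞)`; then `ν_x` has weights `∏ (1 - q) q^{f b}`. Conditioning on the first coordinate,
`ν_q(M) = ∑ₖ (1 - q) qᵏ ν_q(Mₖ)` where the slices `Mₖ` are upper sets increasing in `k`. By Abel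
summation, `∑ₖ (1 - q) qᵏ hₖ = h₀ + ∑ₖ q^{k+1} (h_{k+1} - hₖ)` increases with `q` when `h` does,
strictly when `h` is not constant. Induction on the dimension then gives strict monotonicity:
either `M₀` is a proper nonempty upper set and the induction hypothesis applies to it, or
`M₀ = ∅` and `k ↦ ν_q(Mₖ)` is not constant. The cone above a point of `M` has mass `q^{|f|} → 1`,
and at `q = 0` all the mass sits at `0 ∉ M`.
-/

open Set

noncomputable def geomWeight {n : ℕ} (q : ℝ) (f : Fin n → ℕ) : ℝ :=
  ∏ i, (1 - q) * q ^ f i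

noncomputable def geomProb {n : ℕ} (q : ℝ) (M : Set (Fin n → ℕ)) : ℝ :=
  ∑' f : M, geomWeight q (f : Fin n → ℕ)

def consSlice {n : ℕ} (k : ℕ) (M : Set (Fin (n + 1) → ℕ)) : Set (Fin n → ℕ) :=
  {f | Fin.cons k f ∈ M}

section

variable {n : ℕ} {q : ℝ}

lemma geomWeight_nonneg (hq₀ : 0 ≤ q) (hq₁ : q ≤ 1) (f : Fin n → ℕ) : 0 ≤ geomWeight q f :=
  Finset.prod_nonneg fun _ _ => mul_nonneg (sub_nonneg.2 hq₁) (pow_nonneg hq₀ _)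

lemma geomWeight_cons (k : ℕ) (f : Fin n → ℕ) :
    geomWeight q (Fin.cons k f : Fin (n + 1) → ℕ) = (1 - q) * q ^ k * geomWeight q f := by
  simp [geomWeight, Fin.prod_univ_succ]

lemma geomWeight_add (f g : Fin n → ℕ) :
    geomWeight q (f + g) = q ^ (∑ i, f i) * geomWeight q g := by
  simp only [geomWeight, Pi.add_apply, pow_add, ← Finset.prod_pow_eq_pow_sum,
    ← Finset.prod_mul_distrib]
  exact Finset.prod_congr rfl fun _ _ => by ring

lemma hasSum_one_sub_mul_pow (hq₀ : 0 ≤ q) (hq₁ : q < 1) :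
    HasSum (fun k : ℕ => (1 - q) * q ^ k) 1 := by
  simpa [mul_inv_cancel₀ (sub_ne_zero.2 hq₁.ne')] using
    (hasSum_geometric_of_lt_one hq₀ hq₁).mul_left (1 - q)

lemma hasSum_geomWeight (hq₀ : 0 ≤ q) (hq₁ : q < 1) :
    ∀ n, HasSum (geomWeight q : (Fin n → ℕ) → ℝ) 1
  | 0 => by simpa [geomWeight] using hasSum_fintype (geomWeight q : (Fin 0 → ℕ) → ℝ)
  | n + 1 => by
    have ih := hasSum_geomWeight hq₀ hq₁ n
    have hprod := (hasSum_one_sub_mul_pow hq₀ hq₁).mul ih <|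
      (hasSum_one_sub_mul_pow hq₀ hq₁).summable.mul_of_nonneg ih.summable
        (fun k => mul_nonneg (sub_nonneg.2 hq₁.le) (pow_nonneg hq₀ k))
        (geomWeight_nonneg hq₀ hq₁.le)
    rw [← (Fin.consEquiv fun _ => ℕ).hasSum_iff]
    simpa [Function.comp_def, Fin.consEquiv, geomWeight_cons] using hprod

lemma hasSum_indicator_geomWeight (hq₀ : 0 ≤ q) (hq₁ : q < 1) (M : Set (Fin n → ℕ)) :
    HasSum (M.indicator (geomWeight q)) (geomProb q M) := by
  rw [geomProb, tsum_subtype]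
  exact ((hasSum_geomWeight hq₀ hq₁ n).summable.indicator M).hasSum

lemma geomProb_nonneg (hq₀ : 0 ≤ q) (hq₁ : q ≤ 1) (M : Set (Fin n → ℕ)) : 0 ≤ geomProb q M :=
  tsum_nonneg fun _ => geomWeight_nonneg hq₀ hq₁ _

lemma geomProb_mono (hq₀ : 0 ≤ q) (hq₁ : q < 1) {M N : Set (Fin n → ℕ)} (hMN : M ⊆ N) :
    geomProb q M ≤ geomProb q N :=
  hasSum_le (indicator_le_indicator_of_subset hMN (geomWeight_nonneg hq₀ hq₁.le))
    (hasSum_indicator_geomWeight hq₀ hq₁ M) (hasSum_indicator_geomWeight hq₀ hq₁ N)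

@[simp] lemma geomProb_empty : geomProb q (∅ : Set (Fin n → ℕ)) = 0 := by
  simp [geomProb]

lemma geomProb_univ (hq₀ : 0 ≤ q) (hq₁ : q < 1) : geomProb q (univ : Set (Fin n → ℕ)) = 1 := by
  rw [geomProb, tsum_univ, (hasSum_geomWeight hq₀ hq₁ n).tsum_eq]

lemma geomProb_le_one (hq₀ : 0 ≤ q) (hq₁ : q < 1) (M : Set (Fin n → ℕ)) : geomProb q M ≤ 1 :=
  (geomProb_mono hq₀ hq₁ (subset_univ M)).trans_eq (geomProb_univ hq₀ hq₁)

lemma geomProb_Ici (hq₀ : 0 ≤ q) (hq₁ : q < 1) (f : Fin n → ℕ) :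
    geomProb q (Ici f) = q ^ (∑ i, f i) := by
  refine (hasSum_indicator_geomWeight hq₀ hq₁ _).unique ?_
  rw [← (add_right_injective f).hasSum_iff]
  · have : (Ici f).indicator (geomWeight q) ∘ (f + ·) =
        fun g => q ^ (∑ i, f i) * geomWeight q g :=
      funext fun g => by simp [geomWeight_add]
    simpa [this] using (hasSum_geomWeight hq₀ hq₁ n).mul_left (q ^ ∑ i, f i)
  · intro g hg
    refine indicator_of_notMem (fun hfg => hg ⟨g - f, ?_⟩) _
    exact add_tsub_cancel_of_le hfg

lemma geomProb_zero {M : Set (Fin n → ℕ)} (hM : 0 ∉ M) : geomProb 0 M = 0 := by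
  refine (tsum_congr fun f : M => ?_).trans tsum_zero
  obtain ⟨i, hi⟩ := Function.ne_iff.1 (ne_of_mem_of_not_mem f.2 hM)
  exact Finset.prod_eq_zero (Finset.mem_univ i) (by simp [zero_pow (by simpa using hi)])

lemma IsUpperSet.geomProb_pos {M : Set (Fin n → ℕ)} (hM : IsUpperSet M) (hne : M.Nonempty)
    (hq₀ : 0 < q) (hq₁ : q < 1) : 0 < geomProb q M := by
  obtain ⟨f, hf⟩ := hne
  calc 0 < q ^ (∑ i, f i) := pow_pos hq₀ _
    _ = geomProb q (Ici f) := (geomProb_Ici hq₀.le hq₁ f).symm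
    _ ≤ geomProb q M := geomProb_mono hq₀.le hq₁ (hM.Ici_subset hf)

lemma indicator_geomWeight_cons (M : Set (Fin (n + 1) → ℕ)) (k : ℕ) (f : Fin n → ℕ) :
    M.indicator (geomWeight q) (Fin.cons k f) =
      (1 - q) * q ^ k * (consSlice k M).indicator (geomWeight q) f := by
  by_cases hf : f ∈ consSlice k M
  · rw [indicator_of_mem hf, indicator_of_mem (show Fin.cons k f ∈ M from hf), geomWeight_cons]
  · rw [indicator_of_notMem hf, indicator_of_notMem (show Fin.cons k f ∉ M from hf), mul_zero]

lemma geomProb_eq_tsum_consSlice (hq₀ : 0 ≤ q) (hq₁ : q < 1) (M : Set (Fin (n + 1) → ℕ)) :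
    geomProb q M = ∑' k, (1 - q) * q ^ k * geomProb q (consSlice k M) := by
  refine (HasSum.prod_fiberwise
    ((Fin.consEquiv fun _ => ℕ).hasSum_iff.2 (hasSum_indicator_geomWeight hq₀ hq₁ M))
    fun k => ?_).tsum_eq.symm
  simpa [Fin.consEquiv, indicator_geomWeight_cons] using
    (hasSum_indicator_geomWeight hq₀ hq₁ (consSlice k M)).mul_left ((1 - q) * q ^ k)

lemma isUpperSet_consSlice {M : Set (Fin (n + 1) → ℕ)} (hM : IsUpperSet M) (k : ℕ) :
    IsUpperSet (consSlice k M) :=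
  hM.preimage fun _ _ h => Fin.cons_le_cons.2 ⟨le_rfl, h⟩

lemma IsUpperSet.monotone_consSlice {M : Set (Fin (n + 1) → ℕ)} (hM : IsUpperSet M) :
    Monotone fun k => consSlice k M :=
  fun _ _ hk _ hf => hM (Fin.cons_le_cons.2 ⟨hk, le_rfl⟩) hf

variable {h : ℕ → ℝ} {C q₁ q₂ : ℝ}

lemma summable_pow_mul_of_abs_le (hq₀ : 0 ≤ q) (hq₁ : q < 1) (hh : ∀ k, |h k| ≤ C) :
    Summable fun k => q ^ k * h k :=
  Summable.of_norm_bounded ((summable_geometric_of_lt_one hq₀ hq₁).mul_right C) fun k => by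
    rw [norm_mul, norm_pow, Real.norm_of_nonneg hq₀, Real.norm_eq_abs]
    exact mul_le_mul_of_nonneg_left (hh k) (pow_nonneg hq₀ k)

lemma summable_pow_succ_mul_sub (hq₀ : 0 ≤ q) (hq₁ : q < 1) (hh : ∀ k, |h k| ≤ C) :
    Summable fun k => q ^ (k + 1) * (h (k + 1) - h k) := by
  have S₁ := summable_pow_mul_of_abs_le hq₀ hq₁ hh
  refine (((summable_nat_add_iff 1).2 S₁).sub (S₁.mul_left q)).congr fun k => ?_
  ring

lemma tsum_geom_mul_eq (hq₀ : 0 ≤ q) (hq₁ : q < 1) (hh : ∀ k, |h k| ≤ C) :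
    ∑' k, (1 - q) * q ^ k * h k = h 0 + ∑' k, q ^ (k + 1) * (h (k + 1) - h k) := by
  have S₁ := summable_pow_mul_of_abs_le hq₀ hq₁ hh
  have S₂ : Summable fun k => q ^ (k + 1) * h k := (S₁.mul_left q).congr fun k => by ring
  calc ∑' k, (1 - q) * q ^ k * h k = ∑' k, (q ^ k * h k - q ^ (k + 1) * h k) :=
        tsum_congr fun k => by ring
    _ = h 0 + ∑' k, (q ^ (k + 1) * h (k + 1) - q ^ (k + 1) * h k) := by
        rw [S₁.tsum_sub S₂, S₁.tsum_eq_zero_add, ((summable_nat_add_iff 1).2 S₁).tsum_sub S₂]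
        ring
    _ = h 0 + ∑' k, q ^ (k + 1) * (h (k + 1) - h k) := by simp_rw [mul_sub]

lemma tsum_geom_mul_le (hh : Monotone h) (hb : ∀ k, |h k| ≤ C) (hq₀ : 0 ≤ q₁) (hq : q₁ ≤ q₂)
    (hq₂ : q₂ < 1) : ∑' k, (1 - q₁) * q₁ ^ k * h k ≤ ∑' k, (1 - q₂) * q₂ ^ k * h k := by
  rw [tsum_geom_mul_eq hq₀ (hq.trans_lt hq₂) hb, tsum_geom_mul_eq (hq₀.trans hq) hq₂ hb]
  refine add_le_add_right (Summable.tsum_le_tsum (fun k => ?_)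
    (summable_pow_succ_mul_sub hq₀ (hq.trans_lt hq₂) hb)
    (summable_pow_succ_mul_sub (hq₀.trans hq) hq₂ hb)) _
  exact mul_le_mul_of_nonneg_right (pow_le_pow_left₀ hq₀ hq _) (sub_nonneg.2 (hh k.le_succ))

lemma tsum_geom_mul_lt (hh : Monotone h) (hb : ∀ k, |h k| ≤ C) {i : ℕ} (hi : h i < h (i + 1))
    (hq₀ : 0 ≤ q₁) (hq : q₁ < q₂) (hq₂ : q₂ < 1) :
    ∑' k, (1 - q₁) * q₁ ^ k * h k < ∑' k, (1 - q₂) * q₂ ^ k * h k := by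
  rw [tsum_geom_mul_eq hq₀ (hq.trans hq₂) hb, tsum_geom_mul_eq (hq₀.trans hq.le) hq₂ hb]
  refine add_lt_add_right (Summable.tsum_lt_tsum (i := i) (fun k => ?_) ?_
    (summable_pow_succ_mul_sub hq₀ (hq.trans hq₂) hb)
    (summable_pow_succ_mul_sub (hq₀.trans hq.le) hq₂ hb)) _
  · exact mul_le_mul_of_nonneg_right (pow_le_pow_left₀ hq₀ hq.le _) (sub_nonneg.2 (hh k.le_succ))
  · exact mul_lt_mul_of_pos_right (pow_lt_pow_left₀ hq hq₀ i.succ_ne_zero) (sub_pos.2 hi)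

lemma abs_geomProb_le_one (hq₀ : 0 ≤ q) (hq₁ : q < 1) (M : Set (Fin n → ℕ)) :
    |geomProb q M| ≤ 1 :=
  abs_le.2 ⟨by linarith [geomProb_nonneg hq₀ hq₁.le M], geomProb_le_one hq₀ hq₁ M⟩

lemma consSlice_zero_ne_univ {M : Set (Fin (n + 1) → ℕ)} (hM : IsUpperSet M) (hne : M ≠ univ) :
    consSlice 0 M ≠ univ := fun h =>
  hne (eq_univ_of_forall fun g => hM (Fin.cons_le.2 ⟨Nat.zero_le _, le_rfl⟩)
    (show Fin.tail g ∈ consSlice 0 M from h ▸ mem_univ _))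

lemma summable_geom_mul_geomProb {q' : ℝ} (hq₀ : 0 ≤ q) (hq₁ : q < 1) (hq'₀ : 0 ≤ q')
    (hq'₁ : q' < 1) (N : ℕ → Set (Fin n → ℕ)) :
    Summable fun k => (1 - q) * q ^ k * geomProb q' (N k) :=
  ((summable_pow_mul_of_abs_le hq₀ hq₁ fun k => abs_geomProb_le_one hq'₀ hq'₁ (N k)).mul_left
    (1 - q)).congr fun k => by ring

theorem IsUpperSet.strictMonoOn_geomProb :
    ∀ {n : ℕ} {M : Set (Fin n → ℕ)}, IsUpperSet M → M.Nonempty → M ≠ univ →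
      StrictMonoOn (fun q => geomProb q M) (Ico 0 1)
  | 0, _, _, hne, hne' => (hne' hne.eq_univ).elim
  | n + 1, M, hM, hne, hne' => by
    intro q₁ hq₁ q₂ hq₂ hlt
    have hslice : ∀ k, geomProb q₁ (consSlice k M) ≤ geomProb q₂ (consSlice k M) := by
      intro k
      rcases (consSlice k M).eq_empty_or_nonempty with hk | hk
      · simp [hk]
      rcases eq_or_ne (consSlice k M) univ with hk' | hk'
      · rw [hk', geomProb_univ hq₁.1 hq₁.2, geomProb_univ hq₂.1 hq₂.2]
      · exact ((isUpperSet_consSlice hM k).strictMonoOn_geomProb hk hk' hq₁ hq₂ hlt).le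
    set ν : ℕ → ℝ := fun k => geomProb q₂ (consSlice k M) with hν
    have hν_mono : Monotone ν := fun _ _ hk =>
      geomProb_mono hq₂.1 hq₂.2 (hM.monotone_consSlice hk)
    have hν_le : ∀ k, |ν k| ≤ 1 := fun k => abs_geomProb_le_one hq₂.1 hq₂.2 _
    have hw : ∀ k, 0 ≤ (1 - q₁) * q₁ ^ k := fun k =>
      mul_nonneg (sub_nonneg.2 hq₁.2.le) (pow_nonneg hq₁.1 k)
    have hinner := fun q (hq : q ∈ Ico (0 : ℝ) 1) =>
      summable_geom_mul_geomProb hq₁.1 hq₁.2 hq.1 hq.2 fun k => consSlice k M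
    show geomProb q₁ M < geomProb q₂ M
    rw [geomProb_eq_tsum_consSlice hq₁.1 hq₁.2, geomProb_eq_tsum_consSlice hq₂.1 hq₂.2]
    rcases (consSlice 0 M).eq_empty_or_nonempty with h₀ | h₀
    · obtain ⟨f, hf⟩ := hne
      have hpos : 0 < ν (f 0) := (isUpperSet_consSlice hM (f 0)).geomProb_pos
        ⟨Fin.tail f, by simpa [consSlice] using hf⟩ (hq₁.1.trans_lt hlt) hq₂.2
      obtain ⟨i, hi⟩ : ∃ i, ν i < ν (i + 1) := by
        by_contra! hconst
        have hν₀ : ν 0 = 0 := by simp [hν, h₀]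
        linarith [antitone_nat_of_succ_le hconst (Nat.zero_le (f 0))]
      exact (Summable.tsum_le_tsum (fun k => mul_le_mul_of_nonneg_left (hslice k) (hw k))
        (hinner q₁ hq₁) (hinner q₂ hq₂)).trans_lt
        (tsum_geom_mul_lt hν_mono hν_le hi hq₁.1 hlt hq₂.2)
    · have hlt₀ := (isUpperSet_consSlice hM 0).strictMonoOn_geomProb h₀
        (consSlice_zero_ne_univ hM hne') hq₁ hq₂ hlt
      refine (Summable.tsum_lt_tsum (i := 0) (fun k => mul_le_mul_of_nonneg_left (hslice k) (hw k))
        ?_ (hinner q₁ hq₁) (hinner q₂ hq₂)).trans_le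
        (tsum_geom_mul_le hν_mono hν_le hq₁.1 hlt.le hq₂.2)
      simpa using mul_lt_mul_of_pos_left hlt₀ (sub_pos.2 hq₁.2)

lemma pow_mul_geomWeight_le {r : ℝ} (hq₀ : 0 ≤ q) (hqr : q ≤ r) (hr : r ≤ 1) (f : Fin n → ℕ) :
    (1 - r) ^ n * geomWeight q f ≤ geomWeight r f := by
  rw [geomWeight, geomWeight, ← Fin.prod_const, ← Finset.prod_mul_distrib]
  have hq₁ : 0 ≤ 1 - q := by linarith
  refine Finset.prod_le_prod (fun i _ => by positivity) fun i _ => ?_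
  refine mul_le_mul_of_nonneg_left ?_ (sub_nonneg.2 hr)
  calc (1 - q) * q ^ f i ≤ 1 * q ^ f i := by gcongr; linarith
    _ ≤ r ^ f i := by rw [one_mul]; gcongr

lemma continuousOn_geomProb_Icc {r : ℝ} (hr₀ : 0 ≤ r) (hr : r < 1) (M : Set (Fin n → ℕ)) :
    ContinuousOn (fun q => geomProb q M) (Icc 0 r) := by
  refine continuousOn_tsum (u := fun f : M => geomWeight r (f : Fin n → ℕ) / (1 - r) ^ n)
    (fun f => by unfold geomWeight; fun_prop) ?_ fun f q hq => ?_
  · exact ((hasSum_geomWeight hr₀ hr n).summable.subtype M).div_const _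
  · rw [Real.norm_of_nonneg (geomWeight_nonneg hq.1 (hq.2.trans hr.le) _),
      le_div_iff₀' (pow_pos (sub_pos.2 hr) n)]
    exact pow_mul_geomWeight_le hq.1 hq.2 hr.le _

lemma continuousOn_geomProb (M : Set (Fin n → ℕ)) :
    ContinuousOn (fun q => geomProb q M) (Ico 0 1) :=
  continuousOn_of_locally_continuousOn fun a ha =>
    ⟨Iio ((a + 1) / 2), isOpen_Iio, show a < (a + 1) / 2 by linarith [ha.2],
      (continuousOn_geomProb_Icc (by linarith [ha.1]) (by linarith [ha.2]) M).mono
        fun _ hq => ⟨hq.1.1, hq.2.le⟩⟩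

lemma IsUpperSet.tendsto_geomProb {M : Set (Fin n → ℕ)} (hM : IsUpperSet M)
    (hne : M.Nonempty) :
    Tendsto (fun q => geomProb q M) (𝓝[<] 1) (𝓝 1) := by
  obtain ⟨f, hf⟩ := hne
  have hpow : Tendsto (fun q : ℝ => q ^ ∑ i, f i) (𝓝[<] 1) (𝓝 1) :=
    ((continuous_pow _).tendsto' 1 1 (one_pow _)).mono_left nhdsWithin_le_nhds
  refine tendsto_of_tendsto_of_tendsto_of_le_of_le' hpow tendsto_const_nhds ?_ ?_ <;>
    filter_upwards [Ico_mem_nhdsLT (zero_lt_one' ℝ)] with q hq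
  · rw [← geomProb_Ici hq.1 hq.2]
    exact geomProb_mono hq.1 hq.2 (hM.Ici_subset hf)
  · exact geomProb_le_one hq.1 hq.2 M

end

/-- `ν_x` is the law with weights `geomWeight (geomParam |B| x)`: the paper's geometric parameter
`(1 + x/|B|)⁻¹` is `1 - q` here. -/
noncomputable def geomParam (c x : ℝ) : ℝ := 1 - (1 + x / c)⁻¹

section

variable {c : ℝ}

lemma one_le_one_add_div (hc : 0 < c) {x : ℝ} (hx : 0 ≤ x) : 1 ≤ 1 + x / c := by
  have := div_nonneg hx hc.le; linarith

lemma mapsTo_geomParam (hc : 0 < c) : MapsTo (geomParam c) (Ici 0) (Ico 0 1) := fun _ hx =>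
  ⟨sub_nonneg.2 (inv_le_one_of_one_le₀ (one_le_one_add_div hc hx)),
    sub_lt_self _ (inv_pos.2 (zero_lt_one.trans_le (one_le_one_add_div hc hx)))⟩

lemma strictMonoOn_geomParam (hc : 0 < c) : StrictMonoOn (geomParam c) (Ici 0) :=
  fun _ hx _ _ hxy =>
  sub_lt_sub_left (inv_strictAnti₀ (zero_lt_one.trans_le (one_le_one_add_div hc hx))
    (add_lt_add_right (div_lt_div_of_pos_right hxy hc) 1)) 1

lemma continuousOn_geomParam (hc : 0 < c) : ContinuousOn (geomParam c) (Ici 0) :=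
  continuousOn_const.sub <| (continuousOn_const.add (continuousOn_id.div_const c)).inv₀
    fun _ hx => (zero_lt_one.trans_le (one_le_one_add_div hc hx)).ne'

lemma tendsto_geomParam (hc : 0 < c) : Tendsto (geomParam c) atTop (𝓝[<] 1) := by
  refine tendsto_nhdsWithin_iff.2 ⟨?_, ?_⟩
  · show Tendsto (fun x => 1 - (1 + x / c)⁻¹) atTop (𝓝 1)
    simpa using tendsto_const_nhds.sub
      (tendsto_atTop_add_const_left atTop 1 (tendsto_id.atTop_div_const hc)).inv_tendsto_atTop
  · filter_upwards [eventually_ge_atTop 0] with x hx using (mapsTo_geomParam hc hx).2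

end

lemma geomProdProb_eq_geomProb (B : Type*) [Fintype B] (x : ℝ) (M : Set (B → ℕ)) :
    geomProdProb B x M = geomProb (geomParam (Fintype.card B) x)
      ((Fintype.equivFin B).arrowCongr (Equiv.refl ℕ) '' M) := by
  rw [geomProb, ← ((Fintype.equivFin B).arrowCongr (Equiv.refl ℕ)).image M |>.tsum_eq]
  refine tsum_congr fun f => ?_
  rw [geomWeight, geomParam, sub_sub_cancel, ← (Fintype.equivFin B).prod_comp]
  simp

theorem stmt_8 (B : Type*) [Fintype B] [Nonempty B] (M : Set (B → ℕ))
    (hM : ∀ x ∈ M, ∀ y : B → ℕ, x ≤ y → y ∈ M)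
    (hMne : M.Nonempty) (hMne' : M ≠ Set.univ) :
    StrictMonoOn (fun x => geomProdProb B x M) (Set.Ici 0) ∧
    ContinuousOn (fun x => geomProdProb B x M) (Set.Ici 0) ∧
    geomProdProb B 0 M = 0 ∧
    Tendsto (fun x => geomProdProb B x M) atTop (𝓝 1) := by
  set E := (Fintype.equivFin B).arrowCongr (Equiv.refl ℕ)
  have hc : (0 : ℝ) < Fintype.card B := Nat.cast_pos.2 Fintype.card_pos
  have hup : IsUpperSet (E '' M) := by
    rw [E.image_eq_preimage_symm]
    exact IsUpperSet.preimage (fun _ _ hab ha => hM _ ha _ hab) fun _ _ h _ => h _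
  have hne : (E '' M).Nonempty := hMne.image E
  have hne' : E '' M ≠ univ := by
    rwa [Ne, ← E.range_eq_univ, ← image_univ, E.injective.image_injective.eq_iff]
  have hfun : (fun x => geomProdProb B x M) = (fun q => geomProb q (E '' M)) ∘ geomParam _ :=
    funext fun x => geomProdProb_eq_geomProb B x M
  rw [hfun]
  refine ⟨(hup.strictMonoOn_geomProb hne hne').comp (strictMonoOn_geomParam hc)
      (mapsTo_geomParam hc),
    (continuousOn_geomProb _).comp (continuousOn_geomParam hc) (mapsTo_geomParam hc), ?_,
    (hup.tendsto_geomProb hne).comp (tendsto_geomParam hc)⟩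
  simpa [geomProdProb_eq_geomProb, geomParam] using geomProb_zero (hup.bot_mem.not.2 hne')
end

section
/- Let (W_i)_{i≥1} be i.i.d. standard exponential random variables and Y_∞ = Σ_{i≥0} W_{i+1}/2^i. Then the series defining Y_∞ converges almost surely, and for every x > 0, P(Y_∞ > x) ≤ N·e^{-x}, where N = Π_{j≥1} 2^j/(2^j - 1). -/
/-!
Write `Y_∞ = W₁ + Z` with `Z = ∑_{j ≥ 1} W_{j+1} / 2^j`, which is independent of `W₁`.
Integrating the exponential tail `P(W₁ > x - z) ≤ e^{z - x}` against the law of `Z` gives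
`P(Y_∞ > x) ≤ E[e^Z] e^{-x}`, and by independence and the moment generating function
`E[e^{cW}] = 1 / (1 - c)` of a standard exponential,
`E[e^Z] = ∏_{j ≥ 1} 1 / (1 - 2^{-j}) = N`. To use only finitely many variables at a time, the
bound is proved for the partial sums and passed to the limit, since `{y | y > x}` is open.
Almost sure convergence holds because `E[∑ W_{i+1} / 2^i] = ∑ 1 / 2^i` is finite.
-/

open MeasureTheory ProbabilityTheory Real Set Filter Topology
open scoped ENNReal

namespace Real

lemma prod_le_tprod_of_one_le {ι : Type*} {f : ι → ℝ} (hf : ∀ i, 1 ≤ f i)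
    (hlog : Summable fun i => log (f i)) (s : Finset ι) : ∏ i ∈ s, f i ≤ ∏' i, f i := by
  have hpos i : 0 < f i := one_pos.trans_le (hf i)
  calc ∏ i ∈ s, f i = exp (∑ i ∈ s, log (f i)) := by
        rw [exp_sum]
        exact Finset.prod_congr rfl fun i _ => (exp_log (hpos i)).symm
    _ ≤ exp (∑' i, log (f i)) := exp_le_exp.2 (hlog.sum_le_tsum s fun i _ => log_nonneg (hf i))
    _ = ∏' i, f i := rexp_tsum_eq_tprod hpos hlog

lemma two_pow_le_two_pow_succ_sub_one (j : ℕ) : (2 : ℝ) ^ j ≤ 2 ^ (j + 1) - 1 := by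
  rw [pow_succ]
  linarith [one_le_pow₀ (M₀ := ℝ) (n := j) one_le_two]

lemma one_le_two_pow_succ_div (j : ℕ) : 1 ≤ (2 : ℝ) ^ (j + 1) / (2 ^ (j + 1) - 1) :=
  (one_le_div ((pow_pos two_pos j).trans_le (two_pow_le_two_pow_succ_sub_one j))).2 (by linarith)

lemma summable_log_two_pow_succ_div :
    Summable fun j : ℕ => log ((2 : ℝ) ^ (j + 1) / (2 ^ (j + 1) - 1)) := by
  have h2 := two_pow_le_two_pow_succ_sub_one
  have h (j : ℕ) : (2 : ℝ) ^ (j + 1) / (2 ^ (j + 1) - 1) = 1 + 1 / (2 ^ (j + 1) - 1) := by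
    have : (0 : ℝ) < 2 ^ (j + 1) - 1 := (pow_pos two_pos j).trans_le (h2 j)
    field_simp
    ring
  simp_rw [h]
  refine summable_log_one_add_of_summable
    (summable_geometric_two.of_nonneg_of_le (fun j => ?_) fun j => ?_)
  · exact one_div_nonneg.2 ((pow_pos two_pos j).le.trans (h2 j))
  · rw [one_div_pow]
    exact one_div_le_one_div_of_le (pow_pos two_pos j) (h2 j)

end Real

namespace MeasureTheory

variable {Ω : Type*} [MeasurableSpace Ω] {P : Measure Ω}

lemma measure_lt_le_of_ae_tendsto {α : Type*} [TopologicalSpace α] [LinearOrder α]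
    [OrderTopology α] {Y : ℕ → Ω → α} {Y' : Ω → α}
    (hY : ∀ᵐ ω ∂P, Tendsto (fun n => Y n ω) atTop (𝓝 (Y' ω))) {x : α} {C : ℝ≥0∞}
    (hC : ∀ n, P {ω | x < Y n ω} ≤ C) : P {ω | x < Y' ω} ≤ C := by
  have hsub : {ω | x < Y' ω} ≤ᵐ[P] ⋃ N, ⋂ n ≥ N, {ω | x < Y n ω} := by
    filter_upwards [hY] with ω hω hx
    obtain ⟨N, hN⟩ := eventually_atTop.1 (hω.eventually_const_lt hx)
    exact mem_iUnion.2 ⟨N, mem_iInter₂.2 hN⟩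
  calc P {ω | x < Y' ω} ≤ P (⋃ N, ⋂ n ≥ N, {ω | x < Y n ω}) := measure_mono_ae hsub
    _ = ⨆ N, P (⋂ n ≥ N, {ω | x < Y n ω}) :=
      Monotone.measure_iUnion fun N M hNM =>
        biInter_mono (fun n hn => hNM.trans hn) fun _ _ => le_rfl
    _ ≤ C := iSup_le fun N => (measure_mono (biInter_subset_of_mem le_rfl)).trans (hC N)

lemma lintegral_ofReal_le_one_of_measure_lt_le {X : Ω → ℝ} (hX0 : 0 ≤ᵐ[P] X)
    (hX : AEMeasurable X P) (htail : ∀ t, P {ω | t < X ω} ≤ ENNReal.ofReal (exp (-t))) :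
    ∫⁻ ω, ENNReal.ofReal (X ω) ∂P ≤ 1 := by
  rw [lintegral_eq_lintegral_meas_lt P hX0 hX]
  calc ∫⁻ t in Ioi 0, P {ω | t < X ω} ≤ ∫⁻ t in Ioi 0, ENNReal.ofReal (exp (-t)) :=
        lintegral_mono fun t => htail t
    _ = 1 := by
      rw [← ofReal_integral_eq_lintegral_ofReal (integrableOn_exp_neg_Ioi 0)
        (ae_of_all _ fun t => (exp_pos _).le), integral_exp_neg_Ioi_zero, ENNReal.ofReal_one]

lemma ae_summable_mul_of_lintegral_le {ι : Type*} [Countable ι] {X : ι → Ω → ℝ} {a : ι → ℝ}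
    {C : ℝ≥0∞} (hC : C ≠ ∞) (hX0 : ∀ i, 0 ≤ᵐ[P] X i) (hX : ∀ i, AEMeasurable (X i) P)
    (hXC : ∀ i, ∫⁻ ω, ENNReal.ofReal (X i ω) ∂P ≤ C) (ha0 : ∀ i, 0 ≤ a i)
    (ha : Summable a) :
    ∀ᵐ ω ∂P, Summable fun i => X i ω * a i := by
  have hm : AEMeasurable (fun ω => ∑' i, ENNReal.ofReal (X i ω) * ENNReal.ofReal (a i)) P :=
    AEMeasurable.tsum fun i => (hX i).ennreal_ofReal.mul_const _
  have hfin : ∫⁻ ω, ∑' i, ENNReal.ofReal (X i ω) * ENNReal.ofReal (a i) ∂P ≠ ∞ := by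
    rw [lintegral_tsum fun i => (hX i).ennreal_ofReal.mul_const _]
    refine ne_top_of_le_ne_top ?_ (ENNReal.tsum_le_tsum fun i =>
      (lintegral_mul_const'' _ (hX i).ennreal_ofReal).trans_le (mul_le_mul_left (hXC i) _))
    rw [ENNReal.tsum_mul_left, ← ENNReal.ofReal_tsum_of_nonneg ha0 ha]
    exact ENNReal.mul_ne_top hC ENNReal.ofReal_ne_top
  filter_upwards [ae_lt_top' hm hfin, ae_all_iff.2 hX0] with ω hω hω0
  refine (ENNReal.summable_toReal hω.ne).congr fun i => ?_
  rw [← ENNReal.ofReal_mul (hω0 i), ENNReal.toReal_ofReal (mul_nonneg (hω0 i) (ha0 i))]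

end MeasureTheory

namespace ProbabilityTheory

section ExpMeasure

variable {r : ℝ}

lemma expMeasure_eq_withDensity : expMeasure r = volume.withDensity (exponentialPDF r) := rfl

lemma ae_nonneg_expMeasure : ∀ᵐ x ∂expMeasure r, 0 ≤ x := by
  simp only [ae_iff, not_le, expMeasure_eq_withDensity]
  exact (withDensity_apply _ measurableSet_Iio).trans (lintegral_exponentialPDF_of_nonpos le_rfl)

lemma expMeasure_Ioi_le (hr : 0 < r) (t : ℝ) :
    expMeasure r (Ioi t) ≤ ENNReal.ofReal (exp (-(r * t))) := by
  have := isProbabilityMeasure_expMeasure hr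
  have hcdf : 1 - exp (-(r * t)) ≤ cdf (expMeasure r) t := by
    rw [cdf_expMeasure_eq hr]
    split_ifs with ht
    · exact le_rfl
    · linarith [one_le_exp (show 0 ≤ -(r * t) by nlinarith)]
  rw [← compl_Iic, prob_compl_eq_one_sub measurableSet_Iic, ← ofReal_cdf, tsub_le_iff_right]
  calc (1 : ℝ≥0∞) = ENNReal.ofReal (exp (-(r * t)) + (1 - exp (-(r * t)))) := by simp
    _ ≤ ENNReal.ofReal (exp (-(r * t))) + ENNReal.ofReal (1 - exp (-(r * t))) :=
      ENNReal.ofReal_add_le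
    _ ≤ _ := by gcongr

lemma lintegral_exp_mul_expMeasure (hr : 0 < r) {c : ℝ} (hc : c < r) :
    ∫⁻ x, ENNReal.ofReal (exp (c * x)) ∂expMeasure r = ENNReal.ofReal (r / (r - c)) := by
  have hpdf (x : ℝ) : exponentialPDF r x * ENNReal.ofReal (exp (c * x)) =
      (Ici 0).indicator (fun x => ENNReal.ofReal (r * exp ((c - r) * x))) x := by
    rcases le_or_gt 0 x with hx | hx
    · rw [indicator_of_mem (show x ∈ Ici 0 from hx), exponentialPDF_of_nonneg hx,
        ← ENNReal.ofReal_mul (by positivity), mul_assoc, ← exp_add]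
      ring_nf
    · rw [indicator_of_notMem (show x ∉ Ici 0 from not_le.2 hx), exponentialPDF_of_neg hx,
        zero_mul]
  have hm : Measurable (exponentialPDF r) := (measurable_exponentialPDFReal r).ennreal_ofReal
  rw [expMeasure_eq_withDensity, lintegral_withDensity_eq_lintegral_mul _ hm (by fun_prop)]
  simp only [Pi.mul_apply, hpdf]
  rw [lintegral_indicator measurableSet_Ici, ← restrict_Ioi_eq_restrict_Ici,
    ← ofReal_integral_eq_lintegral_ofReal
      ((integrableOn_exp_mul_Ioi (by linarith) 0).const_mul r)
      (ae_of_all _ fun x => by positivity),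
    integral_const_mul, integral_exp_mul_Ioi (by linarith), mul_zero, exp_zero, ← neg_sub r c,
    div_neg, neg_div, neg_neg, mul_one_div]

variable {Ω : Type*} [MeasurableSpace Ω] {P : Measure Ω} {X : Ω → ℝ}

lemma ae_nonneg_of_map_eq_expMeasure (hX : AEMeasurable X P) (hlaw : P.map X = expMeasure r) :
    0 ≤ᵐ[P] X :=
  ae_of_ae_map (p := (0 ≤ ·)) hX (hlaw ▸ ae_nonneg_expMeasure)

lemma measure_lt_le_of_map_eq_expMeasure (hr : 0 < r) (hX : Measurable X)
    (hlaw : P.map X = expMeasure r) (t : ℝ) :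
    P {ω | t < X ω} ≤ ENNReal.ofReal (exp (-(r * t))) := by
  change P (X ⁻¹' Ioi t) ≤ _
  rw [← Measure.map_apply hX measurableSet_Ioi, hlaw]
  exact expMeasure_Ioi_le hr t

lemma lintegral_exp_mul_of_map_eq_expMeasure (hr : 0 < r) (hX : Measurable X)
    (hlaw : P.map X = expMeasure r) {c : ℝ} (hc : c < r) :
    ∫⁻ ω, ENNReal.ofReal (exp (c * X ω)) ∂P = ENNReal.ofReal (r / (r - c)) := by
  rw [← lintegral_exp_mul_expMeasure hr hc, ← hlaw, lintegral_map (by fun_prop) hX]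

end ExpMeasure

variable {Ω : Type*} [MeasurableSpace Ω] {P : Measure Ω}

lemma IndepFun.measure_lt_add_le [IsFiniteMeasure P] {Z X : Ω → ℝ} (hZ : Measurable Z)
    (hX : Measurable X) (hZX : IndepFun Z X P)
    (htail : ∀ t, P {ω | t < X ω} ≤ ENNReal.ofReal (exp (-t))) (x : ℝ) :
    P {ω | x < Z ω + X ω} ≤
      (∫⁻ ω, ENNReal.ofReal (exp (Z ω)) ∂P) * ENNReal.ofReal (exp (-x)) := by
  set A := {p : ℝ × ℝ | x < p.1 + p.2}
  have hA : MeasurableSet A := measurableSet_lt measurable_const (by fun_prop)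
  have hsection (z : ℝ) :
      P.map X (Prod.mk z ⁻¹' A) ≤ ENNReal.ofReal (exp z) * ENNReal.ofReal (exp (-x)) := by
    rw [Measure.map_apply hX (measurable_prodMk_left hA), ← ENNReal.ofReal_mul (exp_pos _).le,
      ← exp_add]
    convert htail (x - z) using 3
    · ext ω
      simp [A, sub_lt_iff_lt_add']
    · ring
  calc P {ω | x < Z ω + X ω} = P.map (fun ω => (Z ω, X ω)) A := by
        rw [Measure.map_apply (hZ.prodMk hX) hA]
        rfl
    _ = ∫⁻ z, P.map X (Prod.mk z ⁻¹' A) ∂P.map Z := by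
        rw [(indepFun_iff_map_prod_eq_prod_map_map hZ.aemeasurable hX.aemeasurable).1 hZX,
          Measure.prod_apply hA]
    _ ≤ ∫⁻ z, ENNReal.ofReal (exp z) * ENNReal.ofReal (exp (-x)) ∂P.map Z :=
        lintegral_mono hsection
    _ = (∫⁻ ω, ENNReal.ofReal (exp (Z ω)) ∂P) * ENNReal.ofReal (exp (-x)) := by
        rw [lintegral_mul_const _ (by fun_prop), lintegral_map (by fun_prop) hZ]

lemma iIndepFun.lintegral_exp_sum {ι : Type*} {X : ι → Ω → ℝ} (hX : iIndepFun X P)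
    (hXm : ∀ i, Measurable (X i)) (s : Finset ι) :
    ∫⁻ ω, ENNReal.ofReal (exp (∑ i ∈ s, X i ω)) ∂P =
      ∏ i ∈ s, ∫⁻ ω, ENNReal.ofReal (exp (X i ω)) ∂P := by
  simp_rw [exp_sum, ENNReal.ofReal_prod_of_nonneg fun i _ => (exp_pos _).le]
  exact lintegral_prod_eq_prod_lintegral_of_indepFun s _
    (hX.comp (fun _ x => ENNReal.ofReal (exp x)) fun _ => by fun_prop) fun i => by fun_prop

lemma iIndepFun.indepFun_sum_range_succ' {X : ℕ → Ω → ℝ} (hX : iIndepFun X P)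
    (hXm : ∀ i, Measurable (X i)) (n : ℕ) :
    IndepFun (fun ω => ∑ i ∈ Finset.range n, X (i + 1) ω) (X 0) P := by
  convert hX.indepFun_finsetSum_of_notMem hXm (s := (Finset.range n).map (addRightEmbedding 1))
    (i := 0) (by simp) using 1
  ext ω
  simp [Finset.sum_apply]

end ProbabilityTheory

section

variable {Ω : Type*} [MeasurableSpace Ω] {P : Measure Ω} {W : ℕ → Ω → ℝ}

lemma ae_summable_div_two_pow (hmeas : ∀ i, Measurable (W i))
    (hexp : ∀ i, P.map (W i) = expMeasure 1) :
    ∀ᵐ ω ∂P, Summable fun i : ℕ => W (i + 1) ω / 2 ^ i := by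
  have hW0 i := ae_nonneg_of_map_eq_expMeasure (hmeas i).aemeasurable (hexp i)
  have hmean i : ∫⁻ ω, ENNReal.ofReal (W i ω) ∂P ≤ 1 :=
    lintegral_ofReal_le_one_of_measure_lt_le (hW0 i) (hmeas i).aemeasurable
      (by simpa using measure_lt_le_of_map_eq_expMeasure one_pos (hmeas i) (hexp i))
  simpa only [one_div_pow, mul_one_div] using ae_summable_mul_of_lintegral_le ENNReal.one_ne_top
    (fun i => hW0 (i + 1)) (fun i => (hmeas (i + 1)).aemeasurable) (fun i => hmean (i + 1))
    (fun i => by positivity) summable_geometric_two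

lemma lintegral_exp_sum_range_div_two_pow (hmeas : ∀ i, Measurable (W i))
    (hindep : iIndepFun W P) (hexp : ∀ i, P.map (W i) = expMeasure 1) (n : ℕ) :
    ∫⁻ ω, ENNReal.ofReal (exp (∑ i ∈ Finset.range n, W (i + 2) ω / 2 ^ (i + 1))) ∂P =
      ENNReal.ofReal (∏ j ∈ Finset.range n, (2 : ℝ) ^ (j + 1) / (2 ^ (j + 1) - 1)) := by
  have hfactor (j : ℕ) : ∫⁻ ω, ENNReal.ofReal (exp (W (j + 2) ω / 2 ^ (j + 1))) ∂P =
      ENNReal.ofReal (2 ^ (j + 1) / (2 ^ (j + 1) - 1)) := by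
    have h2 : (1 : ℝ) < 2 ^ (j + 1) := one_lt_pow₀ one_lt_two (Nat.succ_ne_zero j)
    simp_rw [div_eq_inv_mul (W _ _)]
    rw [lintegral_exp_mul_of_map_eq_expMeasure one_pos (hmeas _) (hexp _)
      (inv_lt_one_of_one_lt₀ h2)]
    congr 1
    field_simp
  have hindep' : iIndepFun (fun j ω => W (j + 2) ω / 2 ^ (j + 1)) P :=
    (hindep.precomp (add_left_injective 2)).comp _ fun j => measurable_div_const _
  rw [hindep'.lintegral_exp_sum (fun j => (hmeas _).div_const _),
    ENNReal.ofReal_prod_of_nonneg fun j _ => zero_le_one.trans (one_le_two_pow_succ_div j)]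
  exact Finset.prod_congr rfl fun j _ => hfactor j

lemma measure_lt_sum_range_div_two_pow_le [IsProbabilityMeasure P]
    (hmeas : ∀ i, Measurable (W i)) (hindep : iIndepFun W P)
    (hexp : ∀ i, P.map (W i) = expMeasure 1) (x : ℝ) (n : ℕ) :
    P {ω | x < ∑ i ∈ Finset.range (n + 1), W (i + 1) ω / 2 ^ i} ≤
      ENNReal.ofReal ((∏' j : ℕ, (2 ^ (j + 1) : ℝ) / (2 ^ (j + 1) - 1)) * exp (-x)) := by
  set N := ∏' j : ℕ, (2 ^ (j + 1) : ℝ) / (2 ^ (j + 1) - 1)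
  have hN m : ∏ j ∈ Finset.range m, (2 : ℝ) ^ (j + 1) / (2 ^ (j + 1) - 1) ≤ N :=
    prod_le_tprod_of_one_le one_le_two_pow_succ_div summable_log_two_pow_succ_div _
  have hindep' :
      IndepFun (fun ω => ∑ i ∈ Finset.range n, W (i + 2) ω / 2 ^ (i + 1)) (W 1) P := by
    have h := ((hindep.precomp Nat.succ_injective).comp (fun i x => x / 2 ^ i)
      fun i => measurable_div_const _).indepFun_sum_range_succ' (fun i => (hmeas _).div_const _) n
    simp only [Function.comp_def, pow_zero, div_one] at h
    exact h
  simp only [Finset.sum_range_succ' _ n, pow_zero, div_one]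
  calc P {ω | x < ∑ i ∈ Finset.range n, W (i + 2) ω / 2 ^ (i + 1) + W 1 ω}
      ≤ (∫⁻ ω, ENNReal.ofReal (exp (∑ i ∈ Finset.range n, W (i + 2) ω / 2 ^ (i + 1))) ∂P) *
          ENNReal.ofReal (exp (-x)) :=
        hindep'.measure_lt_add_le (by fun_prop) (hmeas 1)
          (by simpa using measure_lt_le_of_map_eq_expMeasure one_pos (hmeas 1) (hexp 1)) x
    _ ≤ ENNReal.ofReal N * ENNReal.ofReal (exp (-x)) := by
        rw [lintegral_exp_sum_range_div_two_pow hmeas hindep hexp]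
        gcongr
        exact hN n
    _ = _ := (ENNReal.ofReal_mul (zero_le_one.trans (by simpa using hN 0))).symm

end

/-- If `(W_i)_{i ≥ 1}` are i.i.d. standard exponential random variables and
`Y_∞ = ∑_{i ≥ 0} W_{i+1} / 2^i`, then the series converges a.s. and for every `x > 0`,
`P(Y_∞ > x) ≤ N e^{-x}` where `N = ∏_{j ≥ 1} 2^j / (2^j - 1)`. -/
theorem stmt_11 {Ω : Type*} [MeasurableSpace Ω] (P : Measure Ω) [IsProbabilityMeasure P]
    (W : ℕ → Ω → ℝ) (hmeas : ∀ i, Measurable (W i))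
    (hindep : iIndepFun W P)
    (hexp : ∀ i, Measure.map (W i) P = expMeasure 1) :
    (∀ᵐ ω ∂P, Summable fun i : ℕ => W (i + 1) ω / 2 ^ i) ∧
    ∀ x : ℝ, 0 < x →
      P {ω | x < ∑' i : ℕ, W (i + 1) ω / 2 ^ i}
        ≤ ENNReal.ofReal ((∏' j : ℕ, (2 ^ (j + 1) : ℝ) / (2 ^ (j + 1) - 1)) * Real.exp (-x)) := by
  have hsum := ae_summable_div_two_pow hmeas hexp
  refine ⟨hsum, fun x _ => measure_lt_le_of_ae_tendsto ?_
    (measure_lt_sum_range_div_two_pow_le hmeas hindep hexp x)⟩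
  filter_upwards [hsum] with ω hω
  exact hω.hasSum.tendsto_sum_nat.comp (tendsto_add_atTop_nat 1)
end

section
/- Define P(z) = Σ_{j∈ℤ} (-1)^j 2^{-j(j+1)/2} · (2^j z)/(2^j z + 1) for z ∈ ℂ not equal to 0 or -2^j for any j ∈ ℤ. Then the defining sum converges and P satisfies the functional equation P(z) = z·P(2z) wherever both sides are defined. -/
/-- The `j`-th term of the sum defining `𝒫(z) = ∑_{j ∈ ℤ} (-1)^j 2^{-j(j+1)/2} (2^j z)/(2^j z + 1)`. -/
noncomputable def pTerm (z : ℂ) (j : ℤ) : ℂ :=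
  (-1 : ℂ) ^ j * (2 : ℂ) ^ (-(j * (j + 1) / 2)) * ((2 : ℂ) ^ j * z) / ((2 : ℂ) ^ j * z + 1)

/-! Writing the `j`-th term as `a_j z / (2^j z + 1)` with `a_j = (-1)^j 2^{-j(j-1)/2}`, one finds
`z · term_{j-1}(2z) = term_j(z) - a_j z`. Summing over `j` and shifting the index gives
`𝒫(z) = z 𝒫(2z) + z ∑ a_j`, and `∑ a_j = 0` because `j ↦ 1 - j` changes the sign of `a_j`.
Convergence comes from the Gaussian decay of `a_j`: the factor `z / (2^j z + 1)` is bounded for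
all but finitely many `j`. -/

open Filter Topology

theorem Int.mul_add_one_ediv_two (j : ℤ) : j * (j + 1) / 2 = j * (j - 1) / 2 + j := by
  rw [show j * (j + 1) = j * (j - 1) + j * 2 by ring, Int.add_mul_ediv_right _ _ two_ne_zero]

theorem Int.natAbs_le_mul_sub_one_ediv_two_add_one (j : ℤ) :
    (j.natAbs : ℤ) ≤ j * (j - 1) / 2 + 1 := by
  have hexact : 2 * (j * (j - 1) / 2) = j * (j - 1) :=
    Int.mul_ediv_cancel' (by simpa [mul_comm] using (Int.even_mul_succ_self (j - 1)).two_dvd)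
  rcases le_or_gt 0 j with hj | hj
  · rw [Int.natAbs_of_nonneg hj]
    rcases le_or_gt j 1 with hj1 | hj1 <;> nlinarith
  · rw [Int.ofNat_natAbs_of_nonpos hj.le]
    nlinarith

theorem summable_pow_natAbs {r : ℝ} (hr : |r| < 1) : Summable (fun j : ℤ => r ^ j.natAbs) := by
  rw [summable_int_iff_summable_nat_and_neg]
  simp only [Int.natAbs_neg, Int.natAbs_natCast, and_self]
  exact summable_geometric_of_abs_lt_one hr

theorem tendsto_zpow_atTop_atTop_of_one_lt {b : ℝ} (hb : 1 < b) :
    Tendsto (fun j : ℤ => b ^ j) atTop atTop := by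
  refine tendsto_atTop_atTop.2 fun x => ?_
  obtain ⟨n, hn⟩ := pow_unbounded_of_one_lt x hb
  refine ⟨n, fun j hj => hn.le.trans ?_⟩
  rw [← zpow_natCast]
  exact zpow_le_zpow_right₀ hb.le hj

theorem tendsto_zpow_atBot_zero_of_one_lt {b : ℝ} (hb : 1 < b) :
    Tendsto (fun j : ℤ => b ^ j) atBot (𝓝 0) := by
  have h := ((tendsto_zpow_atTop_atTop_of_one_lt hb).comp tendsto_neg_atBot_atTop).inv_tendsto_atTop
  simpa [Function.comp_def, zpow_neg, Pi.inv_def] using h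

noncomputable def pCoeff (j : ℤ) : ℂ :=
  (-1 : ℂ) ^ j * (2 : ℂ) ^ (-(j * (j - 1) / 2))

theorem norm_pCoeff (j : ℤ) : ‖pCoeff j‖ = (2 : ℝ) ^ (-(j * (j - 1) / 2)) := by
  simp [pCoeff, norm_zpow]

theorem norm_pCoeff_le (j : ℤ) : ‖pCoeff j‖ ≤ 2 * (2⁻¹ : ℝ) ^ j.natAbs := by
  calc ‖pCoeff j‖ = (2 : ℝ) ^ (-(j * (j - 1) / 2)) := norm_pCoeff j
    _ ≤ (2 : ℝ) ^ (1 - (j.natAbs : ℤ)) := by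
        gcongr
        · norm_num
        · linarith [Int.natAbs_le_mul_sub_one_ediv_two_add_one j]
    _ = 2 * (2⁻¹ : ℝ) ^ j.natAbs := by
        rw [zpow_sub₀ two_ne_zero, zpow_one, zpow_natCast, inv_pow, div_eq_mul_inv]

theorem summable_pCoeff : Summable pCoeff :=
  Summable.of_norm_bounded ((summable_pow_natAbs (by norm_num [abs_of_pos])).mul_left 2)
    norm_pCoeff_le

theorem pCoeff_one_sub (j : ℤ) : pCoeff (1 - j) = -pCoeff j := by
  have hsign : (-1 : ℂ) ^ (1 - j) = -(-1 : ℂ) ^ j := by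
    rw [sub_eq_add_neg, zpow_add₀ (by norm_num), ← inv_zpow', inv_neg_one, zpow_one, neg_one_mul]
  rw [pCoeff, pCoeff, hsign, show (1 - j) * (1 - j - 1) = j * (j - 1) by ring, neg_mul]

theorem hasSum_pCoeff : HasSum pCoeff 0 := by
  have hreflect : ∑' j, pCoeff j = -∑' j, pCoeff j := by
    calc ∑' j, pCoeff j = ∑' j, pCoeff (Equiv.subLeft 1 j) := ((Equiv.subLeft 1).tsum_eq _).symm
      _ = -∑' j, pCoeff j := by simp only [Equiv.subLeft_apply, pCoeff_one_sub, tsum_neg]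
  have hzero : ∑' j, pCoeff j = 0 := by linear_combination hreflect / 2
  exact hzero ▸ summable_pCoeff.hasSum

theorem two_mul_pCoeff_sub_one (j : ℤ) : 2 * pCoeff (j - 1) = -((2 : ℂ) ^ j * pCoeff j) := by
  have hexp : -((j - 1) * (j - 1 - 1) / 2) = j - 1 + -(j * (j - 1) / 2) := by
    have := Int.mul_add_one_ediv_two (j - 1)
    rw [show (j - 1) * (j - 1 + 1) = j * (j - 1) by ring] at this
    omega
  rw [pCoeff, pCoeff, hexp, zpow_add₀ two_ne_zero, zpow_sub_one₀ (by norm_num),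
    zpow_sub_one₀ two_ne_zero, inv_neg_one]
  field_simp

theorem pTerm_eq (z : ℂ) (j : ℤ) : pTerm z j = pCoeff j * z / ((2 : ℂ) ^ j * z + 1) := by
  rw [pTerm, pCoeff, Int.mul_add_one_ediv_two, neg_add, zpow_add₀ two_ne_zero, zpow_neg (2 : ℂ) j]
  field_simp

theorem eventually_half_le_norm_two_zpow_mul_add_one (z : ℂ) :
    ∀ᶠ j : ℤ in cofinite, 1 / 2 ≤ ‖(2 : ℂ) ^ j * z + 1‖ := by
  rcases eq_or_ne z 0 with rfl | hz
  · exact Eventually.of_forall fun j => by norm_num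
  have hnorm (j : ℤ) : ‖(2 : ℂ) ^ j * z‖ = (2 : ℝ) ^ j * ‖z‖ := by simp [norm_zpow]
  rw [Int.cofinite_eq, eventually_sup]
  constructor
  · have h := (tendsto_zpow_atBot_zero_of_one_lt one_lt_two).mul_const ‖z‖
    rw [zero_mul] at h
    filter_upwards [h.eventually_lt_const (by norm_num : (0 : ℝ) < 1 / 2)] with j hj
    have := norm_sub_norm_le (1 : ℂ) (-((2 : ℂ) ^ j * z))
    rw [norm_neg, hnorm, sub_neg_eq_add, add_comm, norm_one] at this
    linarith
  · have h := (tendsto_zpow_atTop_atTop_of_one_lt one_lt_two).atTop_mul_const (norm_pos_iff.2 hz)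
    filter_upwards [h.eventually_ge_atTop (3 / 2)] with j hj
    have := norm_sub_norm_le ((2 : ℂ) ^ j * z) (-1)
    rw [norm_neg, hnorm, sub_neg_eq_add, norm_one] at this
    linarith

theorem summable_pTerm (z : ℂ) : Summable (pTerm z) := by
  refine Summable.of_norm_bounded_eventually (summable_pCoeff.norm.mul_right (2 * ‖z‖)) ?_
  filter_upwards [eventually_half_le_norm_two_zpow_mul_add_one z] with j hj
  rw [pTerm_eq, norm_div, norm_mul, div_le_iff₀ (by linarith)]
  nlinarith [mul_nonneg (norm_nonneg (pCoeff j)) (norm_nonneg z)]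

theorem mul_pTerm_two_mul_sub_one {z : ℂ} {j : ℤ} (hz : (2 : ℂ) ^ j * z + 1 ≠ 0) :
    z * pTerm (2 * z) (j - 1) = pTerm z j - z * pCoeff j := by
  have hcoeff : pCoeff (j - 1) = -((2 : ℂ) ^ j * pCoeff j) / 2 := by
    rw [← two_mul_pCoeff_sub_one]; ring
  have hpow : (2 : ℂ) ^ (j - 1) * (2 * z) = (2 : ℂ) ^ j * z := by
    rw [zpow_sub_one₀ two_ne_zero]; field_simp
  rw [pTerm_eq, pTerm_eq, hpow, hcoeff, eq_sub_iff_add_eq, eq_div_iff hz, add_mul, mul_div_assoc',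
    div_mul_cancel₀ _ hz]
  ring

theorem stmt_14_general (z : ℂ) (hz' : ∀ j : ℤ, z ≠ -(2 : ℂ) ^ j) :
    Summable (fun j : ℤ => pTerm z j) ∧
    (∑' j : ℤ, pTerm z j) = z * ∑' j : ℤ, pTerm (2 * z) j := by
  have hden (j : ℤ) : (2 : ℂ) ^ j * z + 1 ≠ 0 := by
    intro h
    refine hz' (-j) ?_
    rw [zpow_neg]
    field_simp
    linear_combination h
  have hshift : HasSum (fun j => z * pTerm (2 * z) (j - 1)) (z * ∑' j, pTerm (2 * z) j) :=
    ((Equiv.subRight 1).hasSum_iff.2 (summable_pTerm (2 * z)).hasSum).mul_left z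
  have hsum : HasSum (pTerm z) (z * ∑' j, pTerm (2 * z) j) := by
    simpa [mul_pTerm_two_mul_sub_one (hden _)] using hshift.add (hasSum_pCoeff.mul_left z)
  exact ⟨hsum.summable, hsum.tsum_eq⟩

/-- The sum defining `𝒫(z)` converges away from `0` and `-2^j` (`j ∈ ℤ`), and `𝒫` satisfies
the functional equation `𝒫(z) = z ⬝ 𝒫(2z)`. -/
theorem stmt_14 (z : ℂ) (hz : z ≠ 0) (hz' : ∀ j : ℤ, z ≠ -(2 : ℂ) ^ j) :
    Summable (fun j : ℤ => pTerm z j) ∧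
    (∑' j : ℤ, pTerm z j) = z * ∑' j : ℤ, pTerm (2 * z) j :=
  stmt_14_general z hz'
end

section
/- Let H be a connected graph with n ≥ 2 vertices, v a vertex of H such that all vertices are within distance d of v where d ≥ 2 is an integer. Then there exists a vertex w of H and an integer 0 ≤ i ≤ d-1 such that w is at distance i from v and w has at least ⌈n^{1/d} - 1⌉ neighbors at distance i+1 from v. -/
/-!
Let `B i` be the ball of radius `i` around `v`, so `|B 0| = 1` and `|B d| = n`. With
`r = n^{1/d}`, some step `i < d` grows by a factor at least `r`, i.e. the sphere `S (i+1)` has at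
least `(r - 1) |B i| ≥ (r - 1) |S i|` vertices. Every vertex of `S (i+1)` is adjacent to one of
`S i`, so by pigeonhole some vertex of `S i` has at least `r - 1` neighbours in `S (i+1)`.
-/

open Finset

theorem exists_mul_le_succ_of_pow_mul_le {f : ℕ → ℝ} {r : ℝ} {d : ℕ} (hd : d ≠ 0) (hr : 0 ≤ r)
    (h : r ^ d * f 0 ≤ f d) : ∃ i < d, r * f i ≤ f (i + 1) := by
  by_contra! hlt
  have hle : ∀ k ≤ d, f k ≤ r ^ k * f 0 := by
    intro k
    induction k with
    | zero => simp
    | succ k ih =>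
      intro hk
      calc f (k + 1) ≤ r * f k := (hlt k (by omega)).le
        _ ≤ r * (r ^ k * f 0) := mul_le_mul_of_nonneg_left (ih (by omega)) hr
        _ = r ^ (k + 1) * f 0 := by ring
  obtain ⟨k, rfl⟩ := Nat.exists_eq_add_one_of_ne_zero hd
  refine (h.trans_lt ?_).false
  calc f (k + 1) < r * f k := hlt k k.lt_succ_self
    _ ≤ r * (r ^ k * f 0) := mul_le_mul_of_nonneg_left (hle k k.le_succ) hr
    _ = r ^ (k + 1) * f 0 := by ring

namespace SimpleGraph

variable {V : Type*} {G : SimpleGraph V}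

theorem Connected.exists_adj_dist_eq_of_dist_eq_succ (hconn : G.Connected) {v u : V} {i : ℕ}
    (h : G.dist v u = i + 1) : ∃ w, G.Adj w u ∧ G.dist v w = i := by
  obtain ⟨p, hp⟩ := hconn.exists_walk_length_eq_dist v u
  cases hq : p.reverse with
  | nil => simp at h
  | @cons _ w _ hadj q =>
    have hq_len : q.length = i := by
      have := congrArg Walk.length hq
      rw [Walk.length_reverse, hp, h, Walk.length_cons] at this
      omega
    refine ⟨w, hadj.symm, le_antisymm ?_ ?_⟩
    · simpa [hq_len] using G.dist_le q.reverse
    · have := hconn.dist_triangle (u := v) (v := w) (w := u)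
      rw [dist_eq_one_iff_adj.mpr hadj.symm] at this
      omega

variable [Fintype V]

variable (G) in
noncomputable def distBall (v : V) (i : ℕ) : Finset V := {u | G.dist v u ≤ i}

variable (G) in
noncomputable def distSphere (v : V) (i : ℕ) : Finset V := {u | G.dist v u = i}

@[simp]
theorem mem_distBall {v u : V} {i : ℕ} : u ∈ G.distBall v i ↔ G.dist v u ≤ i := by
  simp [distBall]

@[simp]
theorem mem_distSphere {v u : V} {i : ℕ} : u ∈ G.distSphere v i ↔ G.dist v u = i := by
  simp [distSphere]

theorem self_mem_distBall (v : V) (i : ℕ) : v ∈ G.distBall v i := by simp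

theorem distSphere_subset_distBall (v : V) (i : ℕ) : G.distSphere v i ⊆ G.distBall v i :=
  fun _ hu => mem_distBall.2 (mem_distSphere.1 hu).le

theorem Connected.distBall_zero (hconn : G.Connected) (v : V) : G.distBall v 0 = {v} := by
  ext u
  simp [hconn.dist_eq_zero_iff, eq_comm]

theorem distBall_eq_univ {v : V} {d : ℕ} (h : ∀ u, G.dist v u ≤ d) : G.distBall v d = univ :=
  eq_univ_of_forall fun u => mem_distBall.2 (h u)

variable [DecidableEq V]

theorem card_distBall_succ (v : V) (i : ℕ) :
    #(G.distBall v (i + 1)) = #(G.distBall v i) + #(G.distSphere v (i + 1)) := by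
  rw [← card_union_of_disjoint]
  · congr 1
    ext u
    simp only [mem_distBall, mem_union, mem_distSphere]
    omega
  · rw [Finset.disjoint_left]
    intro u hu hu'
    rw [mem_distBall] at hu
    rw [mem_distSphere] at hu'
    omega

variable [DecidableRel G.Adj]

theorem Connected.distSphere_succ_subset_biUnion (hconn : G.Connected) (v : V) (i : ℕ) :
    G.distSphere v (i + 1) ⊆
      (G.distSphere v i).biUnion fun w => {u | G.Adj w u ∧ G.dist v u = i + 1} := by
  intro u hu
  obtain ⟨w, hadj, hw⟩ := hconn.exists_adj_dist_eq_of_dist_eq_succ (mem_distSphere.1 hu)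
  exact mem_biUnion.2 ⟨w, mem_distSphere.2 hw, by simpa [hadj] using hu⟩

theorem Connected.exists_le_card_adj_distSphere_succ (hconn : G.Connected) {v : V} {i : ℕ}
    {b : ℝ} (hne : (G.distSphere v (i + 1)).Nonempty)
    (hb : #(G.distSphere v i) * b ≤ #(G.distSphere v (i + 1))) :
    ∃ w ∈ G.distSphere v i, b ≤ #{u | G.Adj w u ∧ G.dist v u = i + 1} := by
  have hne' : (G.distSphere v i).Nonempty := by
    obtain ⟨u, hu⟩ := hne
    obtain ⟨w, -, hw⟩ := hconn.exists_adj_dist_eq_of_dist_eq_succ (mem_distSphere.1 hu)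
    exact ⟨w, mem_distSphere.2 hw⟩
  refine exists_le_of_sum_le hne' ?_
  calc ∑ _ ∈ G.distSphere v i, b = #(G.distSphere v i) * b := by simp
    _ ≤ #(G.distSphere v (i + 1)) := hb
    _ ≤ ∑ w ∈ G.distSphere v i, (#{u | G.Adj w u ∧ G.dist v u = i + 1} : ℝ) := by
      exact_mod_cast (card_le_card (hconn.distSphere_succ_subset_biUnion v i)).trans
        card_biUnion_le

end SimpleGraph

open SimpleGraph in
/-- In a connected graph on `n ≥ 2` vertices in which every vertex is within distance
`d ≥ 2` of `v`, there is a vertex `w` at some distance `i ≤ d - 1` from `v` having at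
least `⌈n^{1/d} - 1⌉` neighbors at distance `i + 1` from `v`. -/
theorem stmt_18 {V : Type*} [Fintype V] [DecidableEq V] (H : SimpleGraph V)
    [DecidableRel H.Adj] (hconn : H.Connected) (hn : 2 ≤ Fintype.card V)
    (v : V) (d : ℕ) (hd : 2 ≤ d) (hdist : ∀ u, H.dist v u ≤ d) :
    ∃ (w : V) (i : ℕ), i ≤ d - 1 ∧ H.dist v w = i ∧
      ⌈((Fintype.card V : ℝ)) ^ ((1 : ℝ) / d) - 1⌉₊ ≤
        (Finset.univ.filter (fun u => H.Adj w u ∧ H.dist v u = i + 1)).card := by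
  set r : ℝ := (Fintype.card V : ℝ) ^ ((1 : ℝ) / d)
  have hr : 1 < r := Real.one_lt_rpow (by exact_mod_cast hn) (by positivity)
  have hrd : r ^ d = Fintype.card V := by
    rw [← Real.rpow_natCast, ← Real.rpow_mul (by positivity), one_div_mul_cancel (by positivity),
      Real.rpow_one]
  obtain ⟨i, hid, hgrow⟩ := exists_mul_le_succ_of_pow_mul_le (f := fun i => #(H.distBall v i))
    (r := r) (d := d) (by omega) (by linarith)
    (by simp [hconn.distBall_zero, distBall_eq_univ hdist, hrd])
  have hball : (1 : ℝ) ≤ #(H.distBall v i) := by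
    exact_mod_cast card_pos.2 ⟨v, self_mem_distBall v i⟩
  have hsphere : (r - 1) * #(H.distBall v i) ≤ #(H.distSphere v (i + 1)) := by
    simp only [card_distBall_succ, Nat.cast_add] at hgrow
    linarith
  have hne : (H.distSphere v (i + 1)).Nonempty := by
    rw [← card_pos, ← Nat.cast_pos (α := ℝ)]
    nlinarith
  have hsub : (#(H.distSphere v i) : ℝ) ≤ #(H.distBall v i) := by
    exact_mod_cast card_le_card (distSphere_subset_distBall v i)
  obtain ⟨w, hw, hcard⟩ := hconn.exists_le_card_adj_distSphere_succ (b := r - 1) hne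
    (by nlinarith)
  exact ⟨w, i, by omega, mem_distSphere.1 hw, Nat.ceil_le.2 hcard⟩
end

section
/- There exists n₁ ≥ 1 such that for every graph H with n ≥ n₁ vertices, if each vertex independently receives a geometrically distributed number of pebbles with parameter p = (1 + √((log 2)/n))^{-1}, then the probability that no vertex has two or more pebbles while some vertex has no pebble exceeds 1/2. (This event implies the distribution is unsolvable, so the geometric pebbling threshold of H is at least √(n·log 2).) -/
/-!
Write `s = √(log 2 / n)` and `p = (1 + s)⁻¹`, so that `1 - (1 - p)² = (1 + s² / (1 + 2s))⁻¹` and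
`p (1 - p) = s / (1 + s)²`. Since `n s² = log 2`, the inequality `1 + x ≤ exp x` bounds the first
power below by `exp (-log 2 / (1 + 2s)) ≥ 1/2 + s log 2 / (1 + 2s)`, while the second power is at
most `s²`, which is smaller than that gain once `s ≤ 1/4`.
-/

open Real

lemma one_sub_one_sub_inv_one_add_sq {s : ℝ} (hs : 0 ≤ s) :
    1 - (1 - (1 + s)⁻¹) ^ 2 = (1 + s ^ 2 / (1 + 2 * s))⁻¹ := by
  field_simp
  ring

lemma inv_one_add_mul_one_sub_inv_one_add {s : ℝ} (hs : 0 ≤ s) :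
    (1 + s)⁻¹ * (1 - (1 + s)⁻¹) = s / (1 + s) ^ 2 := by
  field_simp
  ring

lemma exp_neg_mul_le_inv_one_add_pow {x : ℝ} (hx : 0 ≤ x) (n : ℕ) :
    exp (-(n * x)) ≤ (1 + x)⁻¹ ^ n := by
  rw [exp_neg, exp_nat_mul, ← inv_pow]
  exact pow_le_pow_left₀ (by positivity)
    (inv_anti₀ (by positivity) (add_comm x 1 ▸ add_one_le_exp x)) n

lemma exp_neg_mul_one_add_le_one_sub_one_sub_inv_one_add_sq_pow {s c : ℝ} {n : ℕ} (hs : 0 ≤ s)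
    (hc : n * s ^ 2 = c) :
    exp (-c) * (1 + 2 * s * c / (1 + 2 * s)) ≤ (1 - (1 - (1 + s)⁻¹) ^ 2) ^ n := by
  have hsplit : -(n * (s ^ 2 / (1 + 2 * s))) = -c + 2 * s * c / (1 + 2 * s) := by
    rw [← hc]; field_simp; ring
  rw [one_sub_one_sub_inv_one_add_sq hs]
  calc exp (-c) * (1 + 2 * s * c / (1 + 2 * s))
      ≤ exp (-c) * exp (2 * s * c / (1 + 2 * s)) := by
        gcongr; linarith [add_one_le_exp (2 * s * c / (1 + 2 * s))]
    _ = exp (-(n * (s ^ 2 / (1 + 2 * s)))) := by rw [hsplit, exp_add]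
    _ ≤ (1 + s ^ 2 / (1 + 2 * s))⁻¹ ^ n := exp_neg_mul_le_inv_one_add_pow (by positivity) n

lemma inv_one_add_mul_one_sub_inv_one_add_pow_le_sq {s : ℝ} (hs₀ : 0 ≤ s) (hs₁ : s ≤ 1) {n : ℕ}
    (hn : 2 ≤ n) : ((1 + s)⁻¹ * (1 - (1 + s)⁻¹)) ^ n ≤ s ^ 2 := by
  rw [inv_one_add_mul_one_sub_inv_one_add hs₀]
  calc (s / (1 + s) ^ 2) ^ n ≤ s ^ n := by
        gcongr
        exact div_le_self hs₀ (one_le_pow₀ (by linarith))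
    _ ≤ s ^ 2 := pow_le_pow_of_le_one hs₀ hs₁ hn

/-- For all sufficiently large `n`, if each of the `n` vertices of a graph independently
receives a geometric number of pebbles with parameter `p = (1 + √((log 2)/n))⁻¹`, then
with probability more than `1/2` no vertex has two or more pebbles while some vertex has
no pebble; this probability is `(1-(1-p)²)ⁿ - (p(1-p))ⁿ`. -/
theorem stmt_19 :
    ∃ n₁ : ℕ, 1 ≤ n₁ ∧ ∀ n : ℕ, n₁ ≤ n →
      (1 - (1 - (1 + Real.sqrt (Real.log 2 / n))⁻¹) ^ 2) ^ n -
          ((1 + Real.sqrt (Real.log 2 / n))⁻¹ * (1 - (1 + Real.sqrt (Real.log 2 / n))⁻¹)) ^ n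
        > 1 / 2 := by
  refine ⟨16, by norm_num, fun n hn => ?_⟩
  have hn' : (16 : ℝ) ≤ n := by exact_mod_cast hn
  have hlog₀ : 1 / 2 < log 2 := by linarith [log_two_gt_d9]
  have hlog₁ : log 2 < 1 := by linarith [log_two_lt_d9]
  set s := √(log 2 / n) with hs
  have hs₀ : 0 < s := sqrt_pos.mpr (by positivity)
  have hs_sq : n * s ^ 2 = log 2 := by
    rw [hs, sq_sqrt (by positivity)]; field_simp
  have hs₁ : s ≤ 1 / 4 := by nlinarith
  have hfirst := exp_neg_mul_one_add_le_one_sub_one_sub_inv_one_add_sq_pow hs₀.le hs_sq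
  rw [exp_neg, exp_log two_pos] at hfirst
  have hsecond := inv_one_add_mul_one_sub_inv_one_add_pow_le_sq hs₀.le (by linarith)
    (by omega : 2 ≤ n)
  have hgain : s ^ 2 < s * log 2 / (1 + 2 * s) := by
    rw [lt_div_iff₀ (by positivity)]; nlinarith
  have : 2⁻¹ * (1 + 2 * s * log 2 / (1 + 2 * s)) = 1 / 2 + s * log 2 / (1 + 2 * s) := by ring
  linarith
end
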